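/- arXiv:2105.08640 — 2 statements merged into one kernel-verified Lean document; each statement's English description precedes it below -/
import Mathlib

section
/- Suppose L is a geodesic in a metric space satisfying the A-contracting projection inequality: for all points x, y with diam(π_L(x) ∪ π_L(y)) > A, one has d(x,y) ≥ d(x, π_L(x)) + diam(π_L(x) ∪ π_L(y)) + d(π_L(y), y) − A. Let ψ be an isometry translating along L with translation distance λ > A. Then for every point x, 2·d(x, π_L(x)) + λ − A ≤ d(x, ψ·x) ≤ 2·d(x, π_L(x)) + λ + 2A. -/
/-- If `L` satisfies the `A`-contracting projection inequality and `ψ` is an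
isometry translating along `L` with translation distance `lam > A`, then
`2 d(x, π x) + lam - A ≤ d(x, ψ x) ≤ 2 d(x, π x) + lam + 2A`. -/
theorem thick_translation_distance {X : Type*} [MetricSpace X]
    (L : Set X) (π : X → X) (hπL : ∀ x, π x ∈ L)
    (hπ : ∀ x, dist x (π x) = Metric.infDist x L)
    (A lam : ℝ) (hA : 0 ≤ A) (hlam : A < lam)
    (hcontr : ∀ x y : X, A < dist (π x) (π y) →
      dist x (π x) + dist (π x) (π y) + dist (π y) y - A ≤ dist x y)
    (ψ : X → X) (hψ : Isometry ψ)
    (hcomm : ∀ x, π (ψ x) = ψ (π x))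
    (hdiam : ∀ x, lam ≤ dist (π x) (ψ (π x)) ∧ dist (π x) (ψ (π x)) ≤ lam + 2 * A)
    (x : X) :
    2 * dist x (π x) + lam - A ≤ dist x (ψ x) ∧
      dist x (ψ x) ≤ 2 * dist x (π x) + lam + 2 * A := by
  obtain ⟨h1, h2⟩ := hdiam x
  have hc := hcomm x
  have hd : dist (π x) (π (ψ x)) = dist (π x) (ψ (π x)) := by rw [hc]
  constructor
  · have := hcontr x (ψ x) (by rw [hd]; linarith)
    have hψd : dist (π (ψ x)) (ψ x) = dist x (π x) := by
      rw [hc, hψ.dist_eq, dist_comm]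
    rw [hd, hψd] at this
    linarith
  · have t : dist x (ψ x) ≤ dist x (π x) + dist (π x) (ψ (π x)) + dist (ψ (π x)) (ψ x) :=
      dist_triangle4 _ _ _ _
    rw [hψ.dist_eq, dist_comm (π x) x] at t
    linarith
end

section
/- Let a, b : ℝ → (0,∞) with e^{hr} ⪯ a(r) and a(r) ⪯ N·e^{hr} (coarse asymptotics with h > 0, N ≥ 1), and let λ, A, L > 0 satisfy e^{hL} > 2e^{hλ/2}N(1 + 2(L+A)/λ). Then a((R−2A−λ)/2) − (1 + 2(L+A)/λ)·a((R−2A)/2 − L) ⪰ (1/(2e^{h(λ/2+A)}))·e^{(h/2)R} as R → ∞. -/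
/-- Key lower-bound estimate: if `e^{hr} ⪯ a(r) ⪯ N e^{hr}` and `L` satisfies
`e^{hL} > 2 e^{hλ/2} N (1 + 2(L+A)/λ)`, then
`a((R-2A-λ)/2) - (1+2(L+A)/λ) a((R-2A)/2 - L) ⪰ e^{(h/2)R}/(2e^{h(λ/2+A)})`. -/
theorem lower_bound_estimate (a : ℝ → ℝ) (ha : ∀ r, 0 < a r)
    (N h lam A L : ℝ) (hN : 1 ≤ N) (hh : 0 < h) (hlam : 0 < lam)
    (hA : 0 < A) (hL : 0 < L)
    (hlow : ∀ δ : ℝ, 1 < δ → ∃ M : ℝ, ∀ r ≥ M, Real.exp (h * r) ≤ δ * a r)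
    (hup : ∀ δ : ℝ, 1 < δ → ∃ M : ℝ, ∀ r ≥ M, a r ≤ δ * N * Real.exp (h * r))
    (hLcond : Real.exp (h * L) >
      2 * Real.exp (h * lam / 2) * N * (1 + 2 * (L + A) / lam)) :
    ∀ δ : ℝ, 1 < δ → ∃ M : ℝ, ∀ R ≥ M,
      (1 / δ) * (1 / (2 * Real.exp (h * (lam / 2 + A)))) * Real.exp (h / 2 * R) ≤
        a ((R - 2 * A - lam) / 2) -
          (1 + 2 * (L + A) / lam) * a ((R - 2 * A) / 2 - L) := by
  intro δ hδ
  have hδ0 : 0 < δ := by linarith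
  set C : ℝ := 1 + 2 * (L + A) / lam with hC
  have hCpos : 0 < C := by positivity
  set q : ℝ := C * N * Real.exp (h * lam / 2 - h * L) with hq
  have hqpos : 0 < q := by positivity
  have hqeq : q * Real.exp (h * L) = C * N * Real.exp (h * lam / 2) := by
    rw [hq, mul_assoc, mul_assoc, ← Real.exp_add]
    ring_nf
  have hq2 : q < 1 / 2 := by
    have hE : 0 < Real.exp (h * L) := Real.exp_pos _
    nlinarith [hLcond, hqeq]
  set t : ℝ := (2 - 1 / (2 * δ)) / (1 + q) with ht
  have hδinv : 1 / (2 * δ) < 1 / 2 := by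
    rw [div_lt_div_iff₀ (by linarith) (by norm_num)]; linarith
  have h1q : 0 < 1 + q := by linarith
  have ht1 : 1 < t := by
    rw [ht, lt_div_iff₀ h1q]; linarith
  have ht0 : 0 < t := by linarith
  have htq : t * (1 + q) = 2 - 1 / (2 * δ) := by
    rw [ht, div_mul_cancel₀ _ (ne_of_gt h1q)]
  have hft : 1 / (2 * δ) ≤ 1 / t - t * q := by
    have h2t : 2 - t ≤ 1 / t := by
      rw [le_div_iff₀ ht0]; nlinarith [sq_nonneg (t - 1)]
    nlinarith
  obtain ⟨M₁, hM₁⟩ := hlow t ht1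
  obtain ⟨M₂, hM₂⟩ := hup t ht1
  refine ⟨max (2 * M₁ + 2 * A + lam) (2 * (M₂ + L) + 2 * A), fun R hR => ?_⟩
  have hR1 : (R - 2 * A - lam) / 2 ≥ M₁ := by
    have := le_trans (le_max_left _ _) hR; linarith
  have hR2 : (R - 2 * A) / 2 - L ≥ M₂ := by
    have := le_trans (le_max_right _ _) hR; linarith
  have hlb := hM₁ _ hR1
  have hub := hM₂ _ hR2
  set E : ℝ := Real.exp (h / 2 * R) with hE
  set P : ℝ := Real.exp (h * (lam / 2 + A)) with hP
  have hEpos : 0 < E := Real.exp_pos _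
  have hPpos : 0 < P := Real.exp_pos _
  have e1 : Real.exp (h * ((R - 2 * A - lam) / 2)) = E / P := by
    rw [hE, hP, ← Real.exp_sub]; congr 1; ring
  have e2 : Real.exp (h * ((R - 2 * A) / 2 - L)) =
      E * Real.exp (h * lam / 2 - h * L) / P := by
    rw [hE, hP, ← Real.exp_add, ← Real.exp_sub]; congr 1; ring
  have step1 : Real.exp (h * ((R - 2 * A - lam) / 2)) / t ≤ a ((R - 2 * A - lam) / 2) := by
    rw [div_le_iff₀ ht0]; linarith [hlb]
  have step2 : C * a ((R - 2 * A) / 2 - L) ≤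
      C * (t * N * Real.exp (h * ((R - 2 * A) / 2 - L))) :=
    mul_le_mul_of_nonneg_left hub hCpos.le
  have key : (1 / δ) * (1 / (2 * P)) * E ≤
      Real.exp (h * ((R - 2 * A - lam) / 2)) / t -
        C * (t * N * Real.exp (h * ((R - 2 * A) / 2 - L))) := by
    rw [e1, e2]
    have h2 : E / P * (1 / (2 * δ)) ≤ E / P * (1 / t - t * q) :=
      mul_le_mul_of_nonneg_left hft (div_pos hEpos hPpos).le
    calc (1 / δ) * (1 / (2 * P)) * E = E / P * (1 / (2 * δ)) := by ring
      _ ≤ E / P * (1 / t - t * q) := h2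
      _ = E / P / t - C * (t * N * (E * Real.exp (h * lam / 2 - h * L) / P)) := by
          rw [hq]; ring
  linarith
end
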